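/- arXiv:1211.0925 — 2 statements merged into one kernel-verified Lean document; each statement's English description precedes it below -/
import Mathlib

section
/- For every L of the form L = n² with n ∈ ℕ, the non-uniform partition function satisfies Z^nu_{L,β} ≥ (e^β/2)^L · (2/(3e^{2β}))^{√L}, and the uniform partition function satisfies Z^u_{L,β} ≥ e^{β(L−2√L)} / |W_L|. -/
open scoped Classical
open Filter

noncomputable section

/-- The three allowed steps: east `(1,0)`, north `(0,1)`, south `(0,-1)`. -/
def stepVec : Fin 3 → ℤ × ℤ := ![(1, 0), (0, 1), (0, -1)]

/-- Position of the partially directed walk after `k` steps,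
for a configuration `s` of `L` steps. -/
def pathPos (L : ℕ) (s : Fin L → Fin 3) (k : ℕ) : ℤ × ℤ :=
  ∑ i : Fin L, if (i : ℕ) < k then stepVec (s i) else 0

/-- `s` encodes a path of `W_L` : it is self-avoiding (all visited sites are
distinct) and its last step is horizontal (step index `0`, i.e. `(1,0)`). -/
def IsPath (L : ℕ) (s : Fin L → Fin 3) : Prop :=
  (∀ j k : ℕ, j ≤ L → k ≤ L → pathPos L s j = pathPos L s k → j = k) ∧
  (∀ hL : 0 < L, s ⟨L - 1, by omega⟩ = 0)

/-- Two lattice sites are adjacent (at euclidean distance 1). -/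
def adjacent (p q : ℤ × ℤ) : Prop := |p.1 - q.1| + |p.2 - q.2| = 1

/-- Number of self-touchings: pairs `(i,j)` with `i < j - 1`, `j ≤ L`,
`‖w_i - w_j‖ = 1`. -/
def numTouch (L : ℕ) (s : Fin L → Fin 3) : ℕ :=
  ((Finset.range (L + 1) ×ˢ Finset.range (L + 1)).filter
    (fun ij => ij.1 + 1 < ij.2 ∧ adjacent (pathPos L s ij.1) (pathPos L s ij.2))).card

/-- The set `W_L` of valid `L`-step configurations. -/
def WL (L : ℕ) : Finset (Fin L → Fin 3) := Finset.univ.filter (IsPath L)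

/-- Non-uniform weight of a configuration: each step taken at the origin or
after a horizontal step has weight `1/3`, each step after a vertical step has
weight `1/2`. -/
def nuWeight (L : ℕ) (s : Fin L → Fin 3) : ℝ :=
  ∏ i : Fin L,
    if (i : ℕ) = 0 then (1 / 3 : ℝ)
    else if s ⟨(i : ℕ) - 1, by have := i.isLt; omega⟩ = 0 then 1 / 3 else 1 / 2

/-- The two models: uniform and non-uniform. -/
inductive Model | u | nu

/-- The law `P^m_L` on `W_L`. -/
def pweight : Model → (L : ℕ) → (Fin L → Fin 3) → ℝ
  | Model.u, L, _ => 1 / ((WL L).card : ℝ)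
  | Model.nu, L, s => nuWeight L s

/-- The partition function `Z^m_{L,β} = Σ_{w ∈ W_L} e^{H_{L,β}(w)} P^m_L(w)`,
with Hamiltonian `H_{L,β}(w) = β · (number of self-touchings)`. -/
def Z (m : Model) (L : ℕ) (β : ℝ) : ℝ :=
  ∑ s ∈ WL L, Real.exp (β * (numTouch L s : ℝ)) * pweight m L s

/-- The normalizing constant `c_β = (1+e^{-β/2})/(1-e^{-β/2})`. -/
def cbeta (β : ℝ) : ℝ := (1 + Real.exp (-β / 2)) / (1 - Real.exp (-β / 2))

/-- The geometric increment law `P_β(v = k) = e^{-(β/2)|k|}/c_β`. -/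
def incP (β : ℝ) (k : ℤ) : ℝ := Real.exp (-(β / 2) * |(k : ℝ)|) / cbeta β

/-- Position `V_j` of the random walk built from increments `v`. -/
def Vpos (n : ℕ) (v : Fin n → ℤ) (j : ℕ) : ℤ :=
  ∑ i : Fin n, if (i : ℕ) < j then v i else 0

/-- The area `A_n = Σ_{j=1}^n |V_j|`. -/
def areaA (n : ℕ) (v : Fin n → ℤ) : ℤ := ∑ j ∈ Finset.Icc 1 n, |Vpos n v j|

/-- Probability under `P_β` of an event `E` depending on the first `n`
increments of the random walk. -/
def wProb (β : ℝ) (n : ℕ) (E : (Fin n → ℤ) → Prop) : ℝ :=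
  ∑' v : Fin n → ℤ, if E v then ∏ i : Fin n, incP β (v i) else 0

/-- `P_β(V_{n,k})`: the walk returns to `0` at time `n` with area `A_n = k`. -/
def PV (β : ℝ) (n k : ℕ) : ℝ :=
  wProb β n fun v => Vpos n v n = 0 ∧ areaA n v = (k : ℤ)

/-- `P_β(V_{n,q})` for rational prescribed area `q`. -/
def PVq (β : ℝ) (n : ℕ) (q : ℚ) : ℝ :=
  wProb β n fun v => Vpos n v n = 0 ∧ (areaA n v : ℚ) = q

/-- `P_β(A_n ≤ α n, V_n = 0)`. -/
def Ple (β : ℝ) (n : ℕ) (α : ℝ) : ℝ :=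
  wProb β n fun v => (areaA n v : ℝ) ≤ α * n ∧ Vpos n v n = 0

/-- `P_β(A_n ≤ α n)`. -/
def PleA (β : ℝ) (n : ℕ) (α : ℝ) : ℝ :=
  wProb β n fun v => (areaA n v : ℝ) ≤ α * n

/-- `P_β(max_{1 ≤ j ≤ n} |V_j| ≤ α)`. -/
def Pmax (β : ℝ) (n : ℕ) (α : ℝ) : ℝ :=
  wProb β n fun v => ∀ j ∈ Finset.Icc 1 n, (|Vpos n v j| : ℝ) ≤ α

/-- `n ∈ N_α`, i.e. `n ≥ 2` and `α n ∈ ℕ`. -/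
def Nmem (α : ℚ) (n : ℕ) : Prop := 2 ≤ n ∧ ∃ m : ℕ, α * (n : ℚ) = (m : ℚ)

/-- `g_β(α) = sup_{N ∈ N_α} (1/N) log P_β(V_{N, αN})` for rational `α ≥ 0`. -/
def gQ (β : ℝ) (α : ℚ) : ℝ :=
  sSup {x : ℝ | ∃ n : ℕ, Nmem α n ∧ x = Real.log (PVq β n (α * n)) / n}

/-- `Γ^u(β) = c_β/e^β`, `Γ^nu(β) = 2c_β/(3e^β)`. -/
def Gam : Model → ℝ → ℝ
  | Model.u, β => cbeta β / Real.exp β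
  | Model.nu, β => 2 * cbeta β / (3 * Real.exp β)

/-- `φ^u_β = β - log(1+√2)`, `φ^nu_β = β - log 2`. -/
def phim : Model → ℝ → ℝ
  | Model.u, β => β - Real.log (1 + Real.sqrt 2)
  | Model.nu, β => β - Real.log 2

end

/-!
Restrict the sum defining `Z` to one path: the zigzag that climbs `n - 1` steps, steps east,
descends `n - 1` steps, steps east, and so on through `n` columns. In each of the first `n - 1`
columns, the `n - 1` sites other than the one where the path turns east face sites of the next
column at the same height, visited at least three steps later; this gives at least
`(n - 1)² ≥ n² - 2n` self-touchings. Exactly the `n` steps that open a column come after the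
origin or a horizontal step, so the non-uniform weight of the path is `(1/3)^n (1/2)^(n² - n)`.
-/

open Finset

lemma pathPos_zero (L : ℕ) (s : Fin L → Fin 3) : pathPos L s 0 = 0 := by
  simp [pathPos]

lemma pathPos_succ (L : ℕ) (s : Fin L → Fin 3) {k : ℕ} (hk : k < L) :
    pathPos L s (k + 1) = pathPos L s k + stepVec (s ⟨k, hk⟩) := by
  have hsplit : ∀ i : Fin L, (if (i : ℕ) < k + 1 then stepVec (s i) else 0) =
      (if (i : ℕ) < k then stepVec (s i) else 0) +
        if ⟨k, hk⟩ = i then stepVec (s i) else 0 := by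
    intro i
    simp only [Fin.ext_iff]
    split_ifs <;> first | omega | simp
  simp only [pathPos, hsplit, sum_add_distrib, sum_ite_eq, mem_univ, if_true]

def zigzag (n : ℕ) : Fin (n ^ 2) → Fin 3 := fun i =>
  if n ∣ (i : ℕ) + 1 then 0 else if Even ((i : ℕ) / n) then 1 else 2

def zigzagPos (n k : ℕ) : ℤ × ℤ :=
  ((k / n : ℕ), if Even (k / n) then ((k % n : ℕ) : ℤ) else n - 1 - ((k % n : ℕ) : ℤ))

lemma pathPos_zigzag (n : ℕ) {k : ℕ} (hk : k ≤ n ^ 2) :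
    pathPos (n ^ 2) (zigzag n) k = zigzagPos n k := by
  induction k with
  | zero => simp [pathPos_zero, zigzagPos, Prod.ext_iff]
  | succ k ih =>
    have hk' : k < n ^ 2 := hk
    have hn : 0 < n := Nat.pos_of_ne_zero (by rintro rfl; simp at hk')
    rw [pathPos_succ _ _ hk', ih hk'.le]
    have hmod := Nat.div_add_mod k n
    have hmod' := Nat.div_add_mod (k + 1) n
    by_cases hd : n ∣ k + 1
    · have hq := Nat.succ_div_of_dvd hd
      have hr0 : (k + 1) % n = 0 := Nat.mod_eq_zero_of_dvd hd
      rw [hq, Nat.mul_add_one] at hmod'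
      have hr' : k % n = n - 1 := by omega
      simp only [zigzag, hd, if_true, zigzagPos, stepVec, hq, hr0, hr', Nat.even_add_one]
      split_ifs <;> simp [Nat.cast_sub hn]
    · have hq := Nat.succ_div_of_not_dvd hd
      have hr' : (k + 1) % n = k % n + 1 := by rw [hq] at hmod'; omega
      simp only [zigzag, hd, if_false, zigzagPos, stepVec, hq, hr']
      split_ifs <;> simp [Prod.ext_iff]; ring

lemma zigzagPos_injective (n : ℕ) : Function.Injective (zigzagPos n) := by
  intro j k h
  simp only [zigzagPos, Prod.mk.injEq, Nat.cast_inj] at h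
  obtain ⟨hq, hr⟩ := h
  rw [hq] at hr
  have hr' : j % n = k % n := by split_ifs at hr <;> omega
  rw [← Nat.div_add_mod j n, ← Nat.div_add_mod k n, hq, hr']

lemma zigzag_mem_WL (n : ℕ) : zigzag n ∈ WL (n ^ 2) := by
  refine mem_filter.2 ⟨mem_univ _, fun j k hj hk h => ?_, fun hL => ?_⟩
  · rw [pathPos_zigzag n hj, pathPos_zigzag n hk] at h
    exact zigzagPos_injective n h
  · simp only [zigzag, Nat.sub_add_cancel hL, dvd_pow_self n two_ne_zero, if_true]

lemma nuWeight_factor_zigzag (n : ℕ) (i : Fin (n ^ 2)) :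
    (if (i : ℕ) = 0 then (1 / 3 : ℝ)
      else if zigzag n ⟨(i : ℕ) - 1, by omega⟩ = 0 then 1 / 3 else 1 / 2) =
      if n ∣ (i : ℕ) then 1 / 3 else 1 / 2 := by
  rcases Nat.eq_zero_or_pos (i : ℕ) with hi | hi
  · simp [hi]
  · have h : (i : ℕ) - 1 + 1 = i := Nat.sub_add_cancel hi
    simp only [hi.ne', if_false, zigzag, h]
    split_ifs <;> simp_all

lemma card_filter_dvd_range_sq (n : ℕ) : #{i ∈ range (n ^ 2) | n ∣ i} = n := by
  rcases Nat.eq_zero_or_pos n with rfl | hn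
  · simp
  · have h := Nat.count_modEq_card (n ^ 2) hn 0
    simp only [Nat.modEq_zero_iff_dvd, Nat.count_eq_card_filter_range] at h
    rw [sq, Nat.mul_div_cancel _ hn, Nat.mul_mod_left] at h
    simpa [sq] using h

lemma nuWeight_zigzag (n : ℕ) :
    nuWeight (n ^ 2) (zigzag n) = (1 / 3 : ℝ) ^ n * (1 / 2 : ℝ) ^ (n ^ 2 - n) := by
  have hcard := card_filter_add_card_filter_not (s := range (n ^ 2)) (p := (n ∣ ·))
  rw [card_range, card_filter_dvd_range_sq] at hcard
  rw [nuWeight, prod_congr rfl fun i _ => nuWeight_factor_zigzag n i,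
    Fin.prod_univ_eq_prod_range (fun i => if n ∣ i then (1 / 3 : ℝ) else 1 / 2), prod_ite,
    prod_const, prod_const, card_filter_dvd_range_sq]
  congr 2
  omega

lemma adjacent_zigzagPos {n b c : ℕ} (hc : c < n) :
    adjacent (zigzagPos n (n * b + c)) (zigzagPos n (n * (b + 1) + (n - 1 - c))) := by
  have hn : 0 < n := by omega
  simp only [zigzagPos, Nat.mul_add_div hn, Nat.div_eq_of_lt hc,
    Nat.div_eq_of_lt (by omega : n - 1 - c < n), Nat.mul_add_mod, Nat.mod_eq_of_lt hc,
    Nat.mod_eq_of_lt (by omega : n - 1 - c < n), add_zero, Nat.even_add_one, adjacent]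
  split_ifs <;> push_cast [Nat.cast_sub (by omega : c ≤ n - 1), Nat.cast_sub hn] <;> norm_num

lemma sq_le_numTouch_zigzag_add_two_mul (n : ℕ) :
    n ^ 2 ≤ numTouch (n ^ 2) (zigzag n) + 2 * n := by
  have hsq : n * (n - 1) + n = n ^ 2 := by cases n <;> simp; ring
  have hcount : (n - 1) * (n - 1) ≤ numTouch (n ^ 2) (zigzag n) := by
    rw [numTouch, ← card_range (n - 1), ← card_product]
    refine card_le_card_of_injOn
      (fun bc => (n * bc.1 + bc.2, n * (bc.1 + 1) + (n - 1 - bc.2))) ?_ ?_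
    · rintro ⟨b, c⟩ hbc
      simp only [coe_product, coe_range, Set.mem_prod, Set.mem_Iio] at hbc
      have hb : n * (b + 1) ≤ n * (n - 1) := Nat.mul_le_mul_left n (by omega)
      have hb1 : n * (b + 1) = n * b + n := Nat.mul_add_one n b
      simp only [coe_filter, mem_product, mem_range, Set.mem_ofPred_eq]
      rw [pathPos_zigzag n (by omega), pathPos_zigzag n (by omega)]
      exact ⟨by omega, by omega, adjacent_zigzagPos (by omega)⟩
    · rintro ⟨b, c⟩ hbc ⟨b', c'⟩ hbc' h
      simp only [coe_product, coe_range, Set.mem_prod, Set.mem_Iio] at hbc hbc'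
      have h1 : n * b + c = n * b' + c' := congrArg Prod.fst h
      have hq := congrArg (· / n) h1
      have hr := congrArg (· % n) h1
      simp only [Nat.mul_add_div (by omega : 0 < n), Nat.div_eq_of_lt (by omega : c < n),
        Nat.div_eq_of_lt (by omega : c' < n), Nat.mul_add_mod, Nat.mod_eq_of_lt (by omega : c < n),
        Nat.mod_eq_of_lt (by omega : c' < n), add_zero] at hq hr
      rw [hq, hr]
  cases n with
  | zero => simp
  | succ m => simp only [Nat.add_sub_cancel] at hcount; nlinarith

lemma pweight_nonneg (m : Model) (L : ℕ) (s : Fin L → Fin 3) : 0 ≤ pweight m L s := by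
  cases m
  · exact one_div_nonneg.2 (Nat.cast_nonneg _)
  · show 0 ≤ nuWeight L s
    exact prod_nonneg fun i _ => by split_ifs <;> norm_num

lemma exp_mul_pweight_le_Z (m : Model) {L : ℕ} (β : ℝ) {s : Fin L → Fin 3}
    (hs : s ∈ WL L) :
    Real.exp (β * numTouch L s) * pweight m L s ≤ Z m L β :=
  single_le_sum (f := fun t => Real.exp (β * numTouch L t) * pweight m L t)
    (fun t _ => mul_nonneg (Real.exp_pos _).le (pweight_nonneg m L t)) hs

lemma exp_mul_nuWeight_zigzag (β : ℝ) (n : ℕ) :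
    Real.exp (β * ((n : ℝ) ^ 2 - 2 * n)) * nuWeight (n ^ 2) (zigzag n) =
      (Real.exp β / 2) ^ (n ^ 2) * (2 / (3 * Real.exp (2 * β))) ^ n := by
  obtain ⟨k, hk⟩ : ∃ k, n ^ 2 = k + n :=
    ⟨n ^ 2 - n, (Nat.sub_add_cancel (Nat.le_self_pow two_ne_zero n)).symm⟩
  have hk' : (n : ℝ) ^ 2 = k + n := by exact_mod_cast hk
  rw [nuWeight_zigzag, hk', hk, Nat.add_sub_cancel,
    show β * ((k : ℝ) + n - 2 * n) = k * β - n * β by ring, Real.exp_sub,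
    Real.exp_nat_mul, Real.exp_nat_mul, two_mul, Real.exp_add]
  simp only [pow_add, div_pow, mul_pow, one_pow]
  field_simp

lemma exp_le_exp_numTouch_zigzag {β : ℝ} (hβ : 0 ≤ β) (n : ℕ) :
    Real.exp (β * ((n : ℝ) ^ 2 - 2 * n)) ≤ Real.exp (β * numTouch (n ^ 2) (zigzag n)) := by
  have h : ((n ^ 2 : ℕ) : ℝ) ≤ ((numTouch (n ^ 2) (zigzag n) + 2 * n : ℕ) : ℝ) :=
    Nat.cast_le.2 (sq_le_numTouch_zigzag_add_two_mul n)
  push_cast at h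
  gcongr
  linarith

theorem stmt3_general (β : ℝ) (hβ : 0 < β) (n : ℕ) :
    Z Model.nu (n ^ 2) β ≥
      (Real.exp β / 2) ^ (n ^ 2) * (2 / (3 * Real.exp (2 * β))) ^ n ∧
    Z Model.u (n ^ 2) β ≥
      Real.exp (β * ((n : ℝ) ^ 2 - 2 * n)) / ((WL (n ^ 2)).card : ℝ) := by
  have hs := zigzag_mem_WL n
  have hT := exp_le_exp_numTouch_zigzag hβ.le n
  refine ⟨?_, ?_⟩
  · calc (Real.exp β / 2) ^ (n ^ 2) * (2 / (3 * Real.exp (2 * β))) ^ n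
        = Real.exp (β * ((n : ℝ) ^ 2 - 2 * n)) * pweight Model.nu (n ^ 2) (zigzag n) :=
          (exp_mul_nuWeight_zigzag β n).symm
      _ ≤ Real.exp (β * numTouch (n ^ 2) (zigzag n)) * pweight Model.nu (n ^ 2) (zigzag n) :=
          mul_le_mul_of_nonneg_right hT (pweight_nonneg _ _ _)
      _ ≤ Z Model.nu (n ^ 2) β := exp_mul_pweight_le_Z _ β hs
  · calc Real.exp (β * ((n : ℝ) ^ 2 - 2 * n)) / ((WL (n ^ 2)).card : ℝ)
        = Real.exp (β * ((n : ℝ) ^ 2 - 2 * n)) * pweight Model.u (n ^ 2) (zigzag n) :=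
          (mul_one_div _ _).symm
      _ ≤ Real.exp (β * numTouch (n ^ 2) (zigzag n)) * pweight Model.u (n ^ 2) (zigzag n) :=
          mul_le_mul_of_nonneg_right hT (pweight_nonneg _ _ _)
      _ ≤ Z Model.u (n ^ 2) β := exp_mul_pweight_le_Z _ β hs

/-- For `L = n²`, `Z^nu_{L,β} ≥ (e^β/2)^L (2/(3e^{2β}))^{√L}` and
`Z^u_{L,β} ≥ e^{β(L - 2√L)}/|W_L|`. -/
theorem stmt3 (β : ℝ) (hβ : 0 < β) (n : ℕ) (hn : 1 ≤ n) :
    Z Model.nu (n ^ 2) β ≥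
      (Real.exp β / 2) ^ (n ^ 2) * (2 / (3 * Real.exp (2 * β))) ^ n ∧
    Z Model.u (n ^ 2) β ≥
      Real.exp (β * ((n : ℝ) ^ 2 - 2 * n)) / ((WL (n ^ 2)).card : ℝ) :=
  stmt3_general β hβ n
end

section
/- For every β > 0 and every real α ≥ 0, the limit lim_{N→∞} (1/N) log P_β(A_N ≤ αN, V_N = 0) exists, and for rational α it coincides with g_β(α) (the limit of (1/N) log P_β(V_{N,αN}) along N ∈ N_α). That is, the two definitions of g_β are equivalent on the nonnegative rationals. -/
open scoped Classical
open Filter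

/-!
Concatenating two walks that both return to `0` adds their lengths and their areas, so
`N ↦ P_β(A_N ≤ αN, V_N = 0)` is supermultiplicative and Fekete's lemma gives the limit, which is
also the supremum of `(1/N) log P_β(A_N ≤ αN, V_N = 0)`; since `V_{N,αN}` is a subevent, this
supremum is at least `g_β(α)`.
Conversely `P_β(A_N ≤ αN, V_N = 0) = Σ_{k ≤ αN} P_β(V_{N,k})` has at most `αN + 1` terms, and each
term is at most `e^{N g_β(α)}`: gluing many copies of a walk of `V_{n,k}`, `k < αn`, to one spike
of height `h` produces a walk of `V_{N,αN}` for a suitable `N ∈ N_α`, at a cost per unit length of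
order `1/h` plus a term vanishing as the number of copies grows.
-/

open Finset Real Topology

lemma hasSum_fin_pi_prod {ι : Type*} {f : ι → ℝ} {s : ℝ} (hf : HasSum f s) (hf0 : 0 ≤ f)
    (n : ℕ) : HasSum (fun v : Fin n → ι => ∏ i, f (v i)) (s ^ n) := by
  induction n with
  | zero => simp
  | succ n ih =>
    set g : (Fin n → ι) → ℝ := fun v => ∏ i, f (v i)
    have hg0 : 0 ≤ g := fun v => prod_nonneg fun _ _ => hf0 _
    have hprod : HasSum (fun p : ι × (Fin n → ι) => f p.1 * g p.2) (s * s ^ n) :=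
      hf.mul ih (Summable.mul_of_nonneg hf.summable ih.summable hf0 hg0)
    rw [← (Fin.consEquiv fun _ => ι).hasSum_iff, pow_succ']
    refine hprod.congr_fun fun p => ?_
    simp only [g, Function.comp_apply, Fin.consEquiv_apply, Fin.prod_univ_succ, Fin.cons_zero,
      Fin.cons_succ]

lemma exists_tendsto_log_div_of_mul_le {p : ℕ → ℝ} (hpos : ∀ n, 0 < p n) (hle : ∀ n, p n ≤ 1)
    (hmul : ∀ m n, p m * p n ≤ p (m + n)) :
    ∃ L, Tendsto (fun n : ℕ => log (p n) / n) atTop (𝓝 L) ∧ ∀ n ≠ 0, log (p n) / n ≤ L := by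
  have hsub : Subadditive fun n => -log (p n) := fun m n => by
    have h := log_le_log (mul_pos (hpos m) (hpos n)) (hmul m n)
    rw [log_mul (hpos m).ne' (hpos n).ne'] at h
    linarith
  have hbdd : BddBelow (Set.range fun n : ℕ => -log (p n) / n) := ⟨0, by
    rintro _ ⟨n, rfl⟩
    exact div_nonneg (neg_nonneg.2 (log_nonpos (hpos n).le (hle n))) n.cast_nonneg⟩
  refine ⟨-hsub.lim, ?_, fun n hn => ?_⟩
  · simpa [neg_div] using (hsub.tendsto_lim hbdd).neg
  · have h := hsub.lim_le_div hbdd hn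
    rw [neg_div] at h
    linarith

lemma le_of_forall_le_add_div_nat {x y C : ℝ} (h : ∀ t : ℕ, 0 < t → x ≤ y + C / t) : x ≤ y := by
  have hlim : Tendsto (fun t : ℕ => y + C / t) atTop (𝓝 y) := by
    simpa using tendsto_const_nhds.add (tendsto_const_div_atTop_nhds_zero_nat C)
  exact ge_of_tendsto hlim (eventually_atTop.2 ⟨1, h⟩)

section Increments

variable {β : ℝ}

lemma exp_neg_half_lt_one (hβ : 0 < β) : exp (-β / 2) < 1 := by
  rw [exp_lt_one_iff]; linarith

lemma one_lt_cbeta (hβ : 0 < β) : 1 < cbeta β := by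
  have hρ := exp_neg_half_lt_one hβ
  rw [cbeta, lt_div_iff₀ (by linarith)]
  linarith [exp_pos (-β / 2)]

lemma incP_pos (hβ : 0 < β) (k : ℤ) : 0 < incP β k :=
  div_pos (exp_pos _) (zero_lt_one.trans (one_lt_cbeta hβ))

lemma hasSum_incP (hβ : 0 < β) : HasSum (incP β) 1 := by
  set ρ := exp (-β / 2)
  have hρ := exp_neg_half_lt_one hβ
  have hgeom := hasSum_geometric_of_lt_one (exp_pos _).le hρ
  have hneg : HasSum (fun n : ℕ => ρ ^ (-((n : ℤ) + 1)).natAbs) (ρ * (1 - ρ)⁻¹) := by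
    refine (hgeom.mul_left ρ).congr_fun fun n => ?_
    rw [show (-((n : ℤ) + 1)).natAbs = n + 1 by omega, pow_succ']
  have hsum : HasSum (fun k : ℤ => ρ ^ k.natAbs) (cbeta β) := by
    convert HasSum.of_nat_of_neg_add_one (f := fun k : ℤ => ρ ^ k.natAbs)
      (by simpa only [Int.natAbs_natCast] using hgeom) hneg using 1
    rw [cbeta]
    ring
  have hc : cbeta β ≠ 0 := (zero_lt_one.trans (one_lt_cbeta hβ)).ne'
  rw [← div_self hc]
  refine (hsum.div_const (cbeta β)).congr_fun fun k => ?_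
  rw [incP, ← exp_nat_mul, Nat.cast_natAbs, Int.cast_abs, neg_div]
  ring_nf

end Increments

section Probability

variable {β : ℝ} {n m : ℕ}

lemma hasSum_prod_incP (hβ : 0 < β) (n : ℕ) :
    HasSum (fun v : Fin n → ℤ => ∏ i, incP β (v i)) 1 := by
  simpa using hasSum_fin_pi_prod (hasSum_incP hβ) (fun k => (incP_pos hβ k).le) n

lemma prod_incP_nonneg (hβ : 0 < β) (v : Fin n → ℤ) : 0 ≤ ∏ i, incP β (v i) :=
  prod_nonneg fun _ _ => (incP_pos hβ _).le

lemma prod_incP_append (v₁ : Fin n → ℤ) (v₂ : Fin m → ℤ) :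
    ∏ i, incP β (Fin.append v₁ v₂ i) = (∏ i, incP β (v₁ i)) * ∏ i, incP β (v₂ i) := by
  simp only [Fin.prod_univ_add, Fin.append_left, Fin.append_right]

lemma ite_prod_incP_nonneg (hβ : 0 < β) (E : (Fin n → ℤ) → Prop) (v : Fin n → ℤ) :
    0 ≤ if E v then ∏ i, incP β (v i) else 0 := by
  split_ifs
  exacts [prod_incP_nonneg hβ v, le_rfl]

lemma summable_ite_prod_incP (hβ : 0 < β) (E : (Fin n → ℤ) → Prop) :
    Summable fun v : Fin n → ℤ => if E v then ∏ i, incP β (v i) else 0 := by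
  refine (hasSum_prod_incP hβ n).summable.of_nonneg_of_le (ite_prod_incP_nonneg hβ E) fun v => ?_
  split_ifs
  exacts [le_rfl, prod_incP_nonneg hβ v]

lemma wProb_nonneg (hβ : 0 < β) (E : (Fin n → ℤ) → Prop) : 0 ≤ wProb β n E :=
  tsum_nonneg (ite_prod_incP_nonneg hβ E)

lemma wProb_mono (hβ : 0 < β) {E₁ E₂ : (Fin n → ℤ) → Prop} (h : ∀ v, E₁ v → E₂ v) :
    wProb β n E₁ ≤ wProb β n E₂ := by
  refine (summable_ite_prod_incP hβ E₁).tsum_le_tsum (fun v => ?_) (summable_ite_prod_incP hβ E₂)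
  by_cases h₁ : E₁ v
  · simp [h₁, h v h₁]
  · simpa [h₁] using ite_prod_incP_nonneg hβ E₂ v

lemma wProb_le_one (hβ : 0 < β) (E : (Fin n → ℤ) → Prop) : wProb β n E ≤ 1 := by
  have h := wProb_mono hβ (E₁ := E) (E₂ := fun _ => True) fun _ _ => trivial
  simpa [wProb, (hasSum_prod_incP hβ n).tsum_eq] using h

lemma prod_incP_le_wProb (hβ : 0 < β) {E : (Fin n → ℤ) → Prop} {w : Fin n → ℤ} (hw : E w) :
    ∏ i, incP β (w i) ≤ wProb β n E := by
  have h := (summable_ite_prod_incP hβ E).le_tsum w fun v _ => ite_prod_incP_nonneg hβ E v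
  rwa [if_pos hw] at h

lemma wProb_eq_prod_incP (w : Fin n → ℤ) : wProb β n (· = w) = ∏ i, incP β (w i) := by
  refine (tsum_eq_single w fun v hv => ?_).trans (if_pos rfl)
  exact if_neg hv

lemma wProb_le_sum {ι : Type*} (hβ : 0 < β) {E : (Fin n → ℤ) → Prop} (s : Finset ι)
    (F : ι → (Fin n → ℤ) → Prop) (h : ∀ v, E v → ∃ i ∈ s, F i v) :
    wProb β n E ≤ ∑ i ∈ s, wProb β n (F i) := by
  simp only [wProb]
  rw [← Summable.tsum_finsetSum fun i _ => summable_ite_prod_incP hβ (F i)]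
  refine (summable_ite_prod_incP hβ E).tsum_le_tsum (fun v => ?_)
    (summable_sum fun i _ => summable_ite_prod_incP hβ (F i))
  split_ifs with hE
  · obtain ⟨i, hi, hFi⟩ := h v hE
    refine le_trans (by rw [if_pos hFi]) (single_le_sum (fun j _ => ?_) hi)
    exact ite_prod_incP_nonneg hβ (F j) v
  · exact sum_nonneg fun j _ => ite_prod_incP_nonneg hβ (F j) v

lemma wProb_mul_le (hβ : 0 < β) {E₁ : (Fin n → ℤ) → Prop} {E₂ : (Fin m → ℤ) → Prop}
    {E : (Fin (n + m) → ℤ) → Prop} (h : ∀ v₁ v₂, E₁ v₁ → E₂ v₂ → E (Fin.append v₁ v₂)) :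
    wProb β n E₁ * wProb β m E₂ ≤ wProb β (n + m) E := by
  have h₁ := summable_ite_prod_incP hβ E₁
  have h₂ := summable_ite_prod_incP hβ E₂
  have h₃ := (Fin.appendEquiv n m).summable_iff.2 (summable_ite_prod_incP hβ E)
  rw [wProb, wProb, wProb, h₁.tsum_mul_tsum h₂ (h₁.mul_of_nonneg h₂
    (ite_prod_incP_nonneg hβ E₁) (ite_prod_incP_nonneg hβ E₂)),
    ← (Fin.appendEquiv n m).tsum_eq]
  refine Summable.tsum_le_tsum (fun p => ?_) (h₁.mul_of_nonneg h₂
    (ite_prod_incP_nonneg hβ E₁) (ite_prod_incP_nonneg hβ E₂)) h₃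
  show _ ≤ if E (Fin.append p.1 p.2) then ∏ i, incP β (Fin.append p.1 p.2 i) else 0
  by_cases hp₁ : E₁ p.1
  · by_cases hp₂ : E₂ p.2
    · simp [hp₁, hp₂, h _ _ hp₁ hp₂, prod_incP_append]
    · simpa [hp₂] using ite_prod_incP_nonneg hβ E _
  · simpa [hp₁] using ite_prod_incP_nonneg hβ E _

end Probability

section Walks

variable {n m : ℕ}

lemma Vpos_append_of_le (v₁ : Fin n → ℤ) (v₂ : Fin m → ℤ) {j : ℕ} (hj : j ≤ n) :
    Vpos (n + m) (Fin.append v₁ v₂) j = Vpos n v₁ j := by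
  rw [Vpos, Vpos, Fin.sum_univ_add]
  have hright : ∀ i : Fin m, (if ((Fin.natAdd n i : Fin (n + m)) : ℕ) < j
      then Fin.append v₁ v₂ (Fin.natAdd n i) else 0) = 0 := fun i => if_neg (by simp; omega)
  simp only [hright, sum_const_zero, add_zero, Fin.val_castAdd, Fin.append_left]

lemma Vpos_append_add (v₁ : Fin n → ℤ) (v₂ : Fin m → ℤ) (t : ℕ) :
    Vpos (n + m) (Fin.append v₁ v₂) (n + t) = Vpos n v₁ n + Vpos m v₂ t := by
  rw [Vpos, Vpos, Vpos, Fin.sum_univ_add]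
  congr 1
  · refine sum_congr rfl fun i _ => ?_
    rw [if_pos (by simp; omega), if_pos i.isLt, Fin.append_left]
  · refine sum_congr rfl fun i _ => ?_
    simp only [Fin.append_right, Fin.val_natAdd, Nat.add_lt_add_iff_left]

lemma areaA_append (v₁ : Fin n → ℤ) (v₂ : Fin m → ℤ) (h : Vpos n v₁ n = 0) :
    areaA (n + m) (Fin.append v₁ v₂) = areaA n v₁ + areaA m v₂ := by
  have hIcc : ∀ k : ℕ, Icc 1 k = Ioc 0 k := fun k => by ext; simp; omega
  simp only [areaA, hIcc]
  rw [← sum_Ioc_consecutive _ (Nat.zero_le n) (Nat.le_add_right n m)]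
  congr 1
  · exact sum_congr rfl fun j hj => by rw [Vpos_append_of_le v₁ v₂ (mem_Ioc.1 hj).2]
  · rw [show Ioc n (n + m) = (Ioc 0 m).map (addLeftEmbedding n) by simp [map_add_left_Ioc],
      sum_map]
    exact sum_congr rfl fun t _ => by simp [Vpos_append_add, h]

lemma areaA_nonneg (v : Fin n → ℤ) : 0 ≤ areaA n v :=
  sum_nonneg fun _ _ => abs_nonneg _

lemma Vpos_zero_walk (j : ℕ) : Vpos n 0 j = 0 := by
  simp [Vpos]

lemma areaA_zero_walk : areaA n 0 = 0 := by
  simp [areaA, Vpos_zero_walk]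

def spike (h l P : ℕ) : Fin P → ℤ := fun i =>
  if (i : ℕ) = 0 then h else if (i : ℕ) = l then -h else 0

variable {h l P : ℕ}

lemma Vpos_spike (hl : 1 ≤ l) (hlP : l < P) (j : ℕ) :
    Vpos P (spike h l P) j = (if 0 < j then (h : ℤ) else 0) + if l < j then -(h : ℤ) else 0 := by
  have hsplit : ∀ i : ℕ, (if i < j then (if i = 0 then (h : ℤ) else if i = l then -h else 0)
      else 0) = (if i = 0 then (if 0 < j then (h : ℤ) else 0) else 0) +
        if i = l then (if l < j then -(h : ℤ) else 0) else 0 := by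
    intro i; split_ifs <;> omega
  simp only [Vpos, spike]
  rw [Fin.sum_univ_eq_sum_range
    (fun i => if i < j then (if i = 0 then (h : ℤ) else if i = l then -h else 0) else 0)]
  simp only [hsplit, sum_add_distrib, sum_ite_eq', mem_range, if_pos (by omega : 0 < P),
    if_pos hlP]

lemma Vpos_spike_self (hl : 1 ≤ l) (hlP : l < P) : Vpos P (spike h l P) P = 0 := by
  simp [Vpos_spike hl hlP, (by omega : 0 < P), hlP]

lemma areaA_spike (hl : 1 ≤ l) (hlP : l < P) : areaA P (spike h l P) = h * l := by
  have hterm : ∀ j ∈ Icc 1 P, |Vpos P (spike h l P) j| = if j ∈ Icc 1 l then (h : ℤ) else 0 := by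
    intro j hj
    rw [mem_Icc] at hj
    rw [Vpos_spike hl hlP, if_pos (by omega : 0 < j)]
    by_cases hjl : j ≤ l <;> simp [hjl, hj.1, (by omega : l < j ↔ ¬j ≤ l)]
  rw [areaA, sum_congr rfl hterm, sum_ite_mem, inter_eq_right.2 (Icc_subset_Icc_right hlP.le),
    sum_const, Nat.card_Icc, nsmul_eq_mul, mul_comm]
  simp

lemma prod_incP_spike {β : ℝ} (hl : 1 ≤ l) (hlP : l < P) :
    ∏ i, incP β (spike h l P i) = exp (-β * h) / cbeta β ^ P := by
  have hsum : ∑ i : Fin P, -(β / 2) * |((spike h l P i : ℤ) : ℝ)| = -β * h := by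
    have hsplit : ∀ i : ℕ,
        -(β / 2) * |(((if i = 0 then (h : ℤ) else if i = l then -h else 0) : ℤ) : ℝ)| =
          (if i = 0 then -(β / 2) * h else 0) + if i = l then -(β / 2) * h else 0 := by
      intro i; split_ifs <;> first | omega | simp
    simp only [spike]
    rw [Fin.sum_univ_eq_sum_range (fun i => -(β / 2) *
      |(((if i = 0 then (h : ℤ) else if i = l then -h else 0) : ℤ) : ℝ)|)]
    simp only [hsplit, sum_add_distrib, sum_ite_eq', mem_range, if_pos (by omega : 0 < P),
      if_pos hlP]
    ring
  simp only [incP, prod_div_distrib, ← exp_sum, hsum, prod_const, card_univ, Fintype.card_fin]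

end Walks

section Events

variable {β : ℝ} {n m : ℕ}

lemma PV_pos (hβ : 0 < β) (hn : 2 ≤ n) (k : ℕ) : 0 < PV β n k := by
  refine (prod_pos fun i _ => incP_pos hβ _).trans_le (prod_incP_le_wProb hβ (w := spike k 1 n) ?_)
  exact ⟨Vpos_spike_self le_rfl hn, by simp [areaA_spike le_rfl hn]⟩

lemma PV_zero (hβ : 0 < β) : PV β 0 0 = 1 := by
  refine le_antisymm (wProb_le_one hβ _) ?_
  calc (1 : ℝ) = ∏ i : Fin 0, incP β ((0 : Fin 0 → ℤ) i) := by simp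
    _ ≤ PV β 0 0 := prod_incP_le_wProb hβ ⟨Vpos_zero_walk 0, by rw [areaA_zero_walk, Nat.cast_zero]⟩

lemma PV_mul_le (hβ : 0 < β) (k l : ℕ) : PV β n k * PV β m l ≤ PV β (n + m) (k + l) :=
  wProb_mul_le hβ fun v₁ v₂ h₁ h₂ =>
    ⟨by rw [Vpos_append_add, h₁.1, h₂.1, add_zero],
      by rw [areaA_append v₁ v₂ h₁.1, h₁.2, h₂.2, Nat.cast_add]⟩

lemma PV_pow_le (hβ : 0 < β) (k : ℕ) : ∀ m, PV β n k ^ m ≤ PV β (n * m) (k * m)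
  | 0 => by simp [PV_zero hβ]
  | m + 1 => by
    rw [pow_succ, Nat.mul_succ, Nat.mul_succ]
    exact (mul_le_mul_of_nonneg_right (PV_pow_le hβ k m) (wProb_nonneg hβ _)).trans
      (PV_mul_le hβ _ _)

lemma PV_mul_spike_le (hβ : 0 < β) {k h l P : ℕ} (hl : 1 ≤ l) (hlP : l < P) :
    PV β n k * (exp (-β * h) / cbeta β ^ P) ≤ PV β (n + P) (k + h * l) := by
  rw [← prod_incP_spike hl hlP, ← wProb_eq_prod_incP]
  refine wProb_mul_le hβ fun v₁ v₂ h₁ h₂ => ?_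
  subst h₂
  exact ⟨by rw [Vpos_append_add, h₁.1, Vpos_spike_self hl hlP, add_zero],
    by rw [areaA_append _ _ h₁.1, h₁.2, areaA_spike hl hlP]; push_cast; ring⟩

lemma Ple_pos (hβ : 0 < β) {α : ℝ} (hα : 0 ≤ α) (n : ℕ) : 0 < Ple β n α :=
  (prod_pos fun i _ => incP_pos hβ _).trans_le
    (prod_incP_le_wProb hβ (w := 0) ⟨by simp [areaA_zero_walk]; positivity, Vpos_zero_walk n⟩)

lemma Ple_mul_le (hβ : 0 < β) (α : ℝ) (n m : ℕ) : Ple β n α * Ple β m α ≤ Ple β (n + m) α :=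
  wProb_mul_le hβ fun v₁ v₂ h₁ h₂ =>
    ⟨by rw [areaA_append v₁ v₂ h₁.2]; push_cast; linarith [h₁.1, h₂.1],
      by rw [Vpos_append_add, h₁.2, h₂.2, add_zero]⟩

lemma PV_le_Ple (hβ : 0 < β) {α : ℝ} {k : ℕ} (hk : (k : ℝ) ≤ α * n) : PV β n k ≤ Ple β n α :=
  wProb_mono hβ fun v hv => ⟨by rw [hv.2]; exact_mod_cast hk, hv.1⟩

lemma Ple_le_sum_PV (hβ : 0 < β) (α : ℝ) :
    Ple β n α ≤ ∑ k ∈ range (⌊α * n⌋₊ + 1), PV β n k := by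
  refine wProb_le_sum hβ _ _ fun v hv => ⟨(areaA n v).toNat, ?_, hv.2, ?_⟩
  · have harea : (((areaA n v).toNat : ℤ) : ℝ) ≤ α * n := by
      rw [Int.toNat_of_nonneg (areaA_nonneg v)]; exact hv.1
    exact mem_range.2 (Nat.lt_succ_of_le (Nat.le_floor (by exact_mod_cast harea)))
  · exact (Int.toNat_of_nonneg (areaA_nonneg v)).symm

end Events

section RateFunction

variable {β : ℝ}

lemma PVq_natCast (n k : ℕ) : PVq β n k = PV β n k := by
  simp only [PVq, PV]
  congr! 3
  norm_cast

lemma gQ_bddAbove (hβ : 0 < β) (α : ℚ) :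
    BddAbove {x : ℝ | ∃ n : ℕ, Nmem α n ∧ x = log (PVq β n (α * n)) / n} :=
  ⟨0, by
    rintro _ ⟨n, -, rfl⟩
    exact div_nonpos_of_nonpos_of_nonneg
      (log_nonpos (wProb_nonneg hβ _) (wProb_le_one hβ _)) n.cast_nonneg⟩

lemma gQ_set_nonempty {α : ℚ} (hα : 0 ≤ α) :
    {x : ℝ | ∃ n : ℕ, Nmem α n ∧ x = log (PVq β n (α * n)) / n}.Nonempty := by
  refine ⟨_, 2 * α.den, ⟨by linarith [α.den_pos], 2 * α.num.toNat, ?_⟩, rfl⟩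
  have hnum : ((α.num.toNat : ℕ) : ℚ) = α.num := by
    exact_mod_cast Int.toNat_of_nonneg (Rat.num_nonneg.2 hα)
  push_cast
  rw [hnum, ← Rat.mul_den_eq_num]
  ring

lemma log_PV_div_le_gQ_of_eq (hβ : 0 < β) {α : ℚ} {n k : ℕ} (hn : 2 ≤ n) (hk : α * n = k) :
    log (PV β n k) / n ≤ gQ β α := by
  have h := le_csSup (gQ_bddAbove hβ α) ⟨n, ⟨hn, k, hk⟩, rfl⟩
  rwa [hk, PVq_natCast] at h

lemma log_PV_div_le_add_spike_cost (hβ : 0 < β) {n m k h l P : ℕ} (hn : 2 ≤ n) (hm : 0 < m)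
    (hl : 1 ≤ l) (hlP : l < P) :
    log (PV β n k) / n ≤ log (PV β (n * m + P) (k * m + h * l)) / (n * m + P : ℕ) +
      (β * h + P * log (cbeta β)) / (n * m : ℕ) := by
  set X := log (PV β n k)
  set C := β * h + P * log (cbeta β)
  have hc := one_lt_cbeta hβ
  have hX : X ≤ 0 := log_nonpos (wProb_nonneg hβ _) (wProb_le_one hβ _)
  have hC : 0 ≤ C := by have := log_pos hc; positivity
  have hspike : 0 < exp (-β * h) / cbeta β ^ P := by positivity
  have hcompare : m * X - C ≤ log (PV β (n * m + P) (k * m + h * l)) := by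
    have h := log_le_log (by have := PV_pos hβ hn k; positivity)
      ((mul_le_mul_of_nonneg_right (PV_pow_le hβ k m) hspike.le).trans
        (PV_mul_spike_le hβ hl hlP))
    rw [log_mul (by have := PV_pos hβ hn k; positivity) hspike.ne', log_pow, log_div
      (exp_pos _).ne' (by positivity), log_exp, log_pow] at h
    linarith
  have hnm : (0 : ℝ) < (n * m : ℕ) := by positivity
  have hN : ((n * m : ℕ) : ℝ) ≤ (n * m + P : ℕ) := by exact_mod_cast Nat.le_add_right _ _
  have hmX : m * X - C ≤ 0 := by nlinarith
  calc X / n = (m * X - C) / (n * m : ℕ) + C / (n * m : ℕ) := by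
        push_cast; field_simp; ring
    _ ≤ (m * X - C) / (n * m + P : ℕ) + C / (n * m : ℕ) := by
        gcongr ?_ + _
        rw [div_le_div_iff₀ hnm (hnm.trans_le hN)]
        nlinarith
    _ ≤ _ := by gcongr

lemma log_PV_div_le_gQ_of_lt (hβ : 0 < β) {α : ℚ} {n k : ℕ} (hn : 2 ≤ n)
    (hk : (k : ℚ) < α * n) : log (PV β n k) / n ≤ gQ β α := by
  have hα : 0 ≤ α := nonneg_of_mul_nonneg_left ((k.cast_nonneg).trans hk.le) (by positivity)
  obtain ⟨a, b, hb, hab⟩ : ∃ a b : ℕ, 0 < b ∧ α = a / b := by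
    refine ⟨α.num.toNat, α.den, α.den_pos, ?_⟩
    rw [eq_div_iff (by positivity), Rat.mul_den_eq_num]
    exact_mod_cast (Int.toNat_of_nonneg (Rat.num_nonneg.2 hα)).symm
  obtain ⟨E, hE, hE0⟩ : ∃ E, b * k + E = a * n ∧ 0 < E := by
    rw [hab, div_mul_eq_mul_div, lt_div_iff₀ (by positivity)] at hk
    have hlt : b * k < a * n := by exact_mod_cast (mul_comm (k : ℚ) b ▸ hk)
    exact ⟨a * n - b * k, by omega, by omega⟩
  set lc := log (cbeta β)
  have hlc : 0 ≤ lc := (log_pos (one_lt_cbeta hβ)).le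
  -- Glue `D t` copies of a walk of `V_{n,k}` to a spike of height `a + s` over `E t + a` steps,
  -- padded to length `E t + a + D`: the total area is then exactly `α` times the total length
  -- (`hN`), and the spike costs at most `a log c_β / s + O(1/t)` per unit length (`hcost`).
  refine le_of_forall_le_add_div_nat (C := a * lc) fun s hs => ?_
  obtain ⟨D, hD, hsD⟩ : ∃ D, a + D = b * (a + s) ∧ s ≤ D := by
    have := Nat.le_mul_of_pos_left (a + s) hb
    exact ⟨b * (a + s) - a, by omega, by omega⟩
  have hD0 : 0 < D := hs.trans_le hsD
  refine le_of_forall_le_add_div_nat (C := (β * (a + s) + (a + D) * lc) / (n * D))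
    fun t ht => ?_
  have hN : α * ((n * (D * t) + (E * t + a + D) : ℕ) : ℚ) =
      ((k * (D * t) + (a + s) * (E * t + a) : ℕ) : ℚ) := by
    have hE' : (b : ℚ) * k + E = a * n := by exact_mod_cast hE
    have hD' : (a : ℚ) + D = b * (a + s) := by exact_mod_cast hD
    rw [hab, div_mul_eq_mul_div, div_eq_iff (by positivity)]
    push_cast
    linear_combination (-(D * t : ℚ)) * hE' + ((E : ℚ) * t + a) * hD'
  have hcost : (β * (a + s : ℕ) + (E * t + a + D : ℕ) * lc) / (n * (D * t) : ℕ) ≤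
      a * lc / s + (β * (a + s) + (a + D) * lc) / (n * D) / t := by
    have hsplit : (β * (a + s : ℕ) + (E * t + a + D : ℕ) * lc) / (n * (D * t) : ℕ) =
        (β * (a + s) + (a + D) * lc) / (n * D) / t + E * lc / (n * D) := by
      push_cast
      field_simp
      ring
    have hEn : (E : ℝ) * s ≤ a * n * D := by
      exact_mod_cast Nat.mul_le_mul (by omega : E ≤ a * n) hsD
    have hEcost : E * lc / (n * D) ≤ a * lc / s := by
      rw [div_le_div_iff₀ (by positivity) (by positivity)]
      nlinarith
    rw [hsplit, add_comm]
    exact add_le_add_left hEcost _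
  calc log (PV β n k) / n
      ≤ log (PV β (n * (D * t) + (E * t + a + D)) (k * (D * t) + (a + s) * (E * t + a))) /
          (n * (D * t) + (E * t + a + D) : ℕ) +
        (β * (a + s : ℕ) + (E * t + a + D : ℕ) * lc) / (n * (D * t) : ℕ) :=
        log_PV_div_le_add_spike_cost hβ hn (by positivity) (by nlinarith) (by omega)
    _ ≤ gQ β α + (a * lc / s + (β * (a + s) + (a + D) * lc) / (n * D) / t) := by
        gcongr
        have := Nat.le_mul_of_pos_right n (by positivity : 0 < D * t)
        exact log_PV_div_le_gQ_of_eq hβ (by omega) hN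
    _ = _ := by ring

lemma log_PV_div_le_gQ (hβ : 0 < β) {α : ℚ} {n k : ℕ} (hn : 2 ≤ n) (hk : (k : ℚ) ≤ α * n) :
    log (PV β n k) / n ≤ gQ β α :=
  hk.lt_or_eq.elim (log_PV_div_le_gQ_of_lt hβ hn) fun h => log_PV_div_le_gQ_of_eq hβ hn h.symm

lemma log_Ple_div_le (hβ : 0 < β) {α : ℚ} (hα : 0 ≤ α) {n : ℕ} (hn : 2 ≤ n) :
    log (Ple β n α) / n ≤ gQ β α + log (⌊(α : ℝ) * n⌋₊ + 1) / n := by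
  set K := ⌊(α : ℝ) * n⌋₊
  have hn0 : (0 : ℝ) < n := by positivity
  have hterm : ∀ k ∈ range (K + 1), PV β n k ≤ exp (n * gQ β α) := by
    intro k hk
    have hkα : (k : ℝ) ≤ α * n :=
      (Nat.cast_le.2 (Nat.lt_succ_iff.1 (mem_range.1 hk))).trans (Nat.floor_le (by positivity))
    have h := log_PV_div_le_gQ hβ hn (by exact_mod_cast hkα)
    rw [div_le_iff₀ hn0] at h
    rw [← exp_log (PV_pos hβ hn k)]
    exact exp_le_exp.2 (by linarith)
  have hsum : Ple β n α ≤ (K + 1) * exp (n * gQ β α) :=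
    (Ple_le_sum_PV hβ α).trans (by simpa using sum_le_card_nsmul _ _ _ hterm)
  have hlog := log_le_log (Ple_pos hβ (by positivity) n) hsum
  rw [log_mul (by positivity) (exp_pos _).ne', log_exp] at hlog
  rw [div_le_iff₀ hn0, add_mul, div_mul_cancel₀ _ hn0.ne']
  linarith

lemma tendsto_log_floor_add_one_div {α : ℝ} (hα : 0 ≤ α) :
    Tendsto (fun n : ℕ => log (⌊α * n⌋₊ + 1) / n) atTop (𝓝 0) := by
  have hupper : Tendsto (fun n : ℕ => log (α + 1) / n + log n / n) atTop (𝓝 0) := by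
    simpa using (tendsto_const_div_atTop_nhds_zero_nat (log (α + 1))).add
      (Real.isLittleO_log_id_atTop.tendsto_div_nhds_zero.comp tendsto_natCast_atTop_atTop)
  refine tendsto_of_tendsto_of_tendsto_of_le_of_le' tendsto_const_nhds hupper
    (Eventually.of_forall fun n => div_nonneg (log_nonneg (by simp)) n.cast_nonneg)
    (eventually_atTop.2 ⟨1, fun n hn => ?_⟩)
  have hn1 : (1 : ℝ) ≤ n := by exact_mod_cast hn
  have hbound : (⌊α * n⌋₊ : ℝ) + 1 ≤ (α + 1) * n := by
    nlinarith [Nat.floor_le (mul_nonneg hα (n.cast_nonneg : (0 : ℝ) ≤ n))]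
  rw [← add_div, ← log_mul (by positivity) (by positivity)]
  exact div_le_div_of_nonneg_right (log_le_log (by positivity) hbound) n.cast_nonneg

end RateFunction

/-- For every `β > 0` and real `α ≥ 0` the limit
`lim_{N→∞} (1/N) log P_β(A_N ≤ αN, V_N = 0)` exists, and for rational `α`
it coincides with `g_β(α)` (defined along `N ∈ N_α`). -/
theorem stmt10 (β : ℝ) (hβ : 0 < β) :
    (∀ α : ℝ, 0 ≤ α → ∃ l : ℝ,
      Filter.Tendsto (fun n : ℕ => Real.log (Ple β n α) / n) Filter.atTop (nhds l)) ∧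
    (∀ α : ℚ, 0 ≤ α →
      Filter.Tendsto (fun n : ℕ => Real.log (Ple β n (α : ℝ)) / n) Filter.atTop
        (nhds (gQ β α))) := by
  have hlim : ∀ α : ℝ, 0 ≤ α → ∃ L, Tendsto (fun n : ℕ => log (Ple β n α) / n) atTop (𝓝 L) ∧
      ∀ n ≠ 0, log (Ple β n α) / n ≤ L := fun α hα =>
    exists_tendsto_log_div_of_mul_le (Ple_pos hβ hα) (fun _ => wProb_le_one hβ _) (Ple_mul_le hβ α)
  refine ⟨fun α hα => (hlim α hα).imp fun _ h => h.1, fun α hα => ?_⟩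
  have hαR : (0 : ℝ) ≤ α := by exact_mod_cast hα
  obtain ⟨L, hL, hL_ge⟩ := hlim α hαR
  suffices hgQ : gQ β α = L by rwa [hgQ]
  refine le_antisymm (csSup_le (gQ_set_nonempty hα) ?_) ?_
  · rintro _ ⟨n, ⟨hn, k, hk⟩, rfl⟩
    rw [hk, PVq_natCast]
    have hPV := PV_le_Ple hβ (α := α) (k := k) (by exact_mod_cast hk.ge)
    exact (div_le_div_of_nonneg_right (log_le_log (PV_pos hβ hn k) hPV) n.cast_nonneg).trans
      (hL_ge n (by omega))
  · have hupper : Tendsto (fun n : ℕ => gQ β α + log (⌊(α : ℝ) * n⌋₊ + 1) / n) atTop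
        (𝓝 (gQ β α)) := by
      simpa using tendsto_const_nhds.add (tendsto_log_floor_add_one_div hαR)
    exact le_of_tendsto_of_tendsto hL hupper
      (eventually_atTop.2 ⟨2, fun n hn => log_Ple_div_le hβ hα hn⟩)
end
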